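/- Let S ⊆ {1, 2, 3, …} be finite and nonempty with m = max S, and let z ∈ K with z ≠ 0. If x ∈ K satisfies x_j = 0 for all j ≤ m − ν(z) (that is, x = 0 or ν(x) > m − ν(z)), then ω_{S,z}(x,y) = ω_{S,z}(y,x) for every y ∈ K. Consequently, the subgroup S_{ω_{S,z}} = {x ∈ K : ω_{S,z}(x,y) = ω_{S,z}(y,x) for all y ∈ K} contains the compact open subgroup U = {x ∈ K : x_j = 0 for all j ≤ m − ν(z)}. -/

import Mathlib

noncomputable section

/-- `𝔽_p((t))`, the field of formal Laurent series over `𝔽_p = ℤ/pℤ`. -/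
abbrev Kp (p : ℕ) : Type := HahnSeries ℤ (ZMod p)

lemma isPWO_Ici (a : ℤ) : (Set.Ici a).IsPWO := by
  have h2 : ((fun k : ℕ => a + (k : ℤ)) '' Set.univ).IsPWO :=
    ((Set.isWF_univ_iff.mpr (inferInstance : WellFoundedLT ℕ)).isPWO).image_of_monotone
      (fun i j hij => by omega)
  have heq : Set.Ici a = (fun k : ℕ => a + (k : ℤ)) '' Set.univ := by
    ext m
    simp only [Set.image_univ, Set.mem_range, Set.mem_Ici]
    constructor
    · intro hm; exact ⟨(m - a).toNat, by omega⟩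
    · rintro ⟨k, rfl⟩; omega
  rw [heq]; exact h2

/-- `η_S(x,y)`: the Laurent series whose coefficient of `t^m` is
`∑_{n ∈ S} x_{m-n} · y_{m+n}` (a finite sum for each `m`). -/
def etaS (p : ℕ) (S : Set ℕ) (x y : Kp p) : Kp p :=
  ⟨fun m => ∑ᶠ n ∈ S, x.coeff (m - (n : ℤ)) * y.coeff (m + (n : ℤ)), by
    refine (isPWO_Ici x.order).mono ?_
    intro m hm
    simp only [Function.mem_support] at hm
    rw [Set.mem_Ici]
    by_contra hlt
    push_neg at hlt
    apply hm
    apply finsum_mem_of_eqOn_zero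
    intro n _
    have hc : x.coeff (m - (n : ℤ)) = 0 :=
      HahnSeries.coeff_eq_zero_of_lt_order (by omega)
    show x.coeff (m - (n : ℤ)) * y.coeff (m + (n : ℤ)) = (0 : ℕ → ZMod p) n
    rw [hc, zero_mul, Pi.zero_apply]⟩

/-- The subgroup of series all of whose coefficients below `k` vanish. -/
def hahnU (R : Type*) [AddCommGroup R] (k : ℤ) : AddSubgroup (HahnSeries ℤ R) where
  carrier := {x | ∀ j : ℤ, j < k → x.coeff j = 0}
  zero_mem' := by intro j _; exact HahnSeries.coeff_zero
  add_mem' := by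
    intro a b ha hb j hj
    rw [HahnSeries.coeff_add, ha j hj, hb j hj, add_zero]
  neg_mem' := by
    intro a ha j hj
    rw [HahnSeries.coeff_neg, ha j hj, neg_zero]

/-- The `t`-adic (valuation) topology: the group topology in which the subgroups `hahnU R k`,
`k ∈ ℤ`, form a neighbourhood basis of `0`. -/
instance hahnTopology (R : Type*) [AddCommGroup R] : TopologicalSpace (HahnSeries ℤ R) :=
  ⨅ k : ℤ, TopologicalSpace.induced
    (fun x : HahnSeries ℤ R => (QuotientAddGroup.mk x : HahnSeries ℤ R ⧸ hahnU R k)) ⊥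

/-- The injective character `e : 𝔽_p → 𝕋 = ℝ/ℤ`, `a ↦ exp(2πi·ã/p)`, written additively. -/
def echarM (M : ℕ) (a : ZMod M) : AddCircle (1 : ℝ) :=
  (((a.val : ℝ) / (M : ℝ) : ℝ) : AddCircle (1 : ℝ))

/-- The multiplier `ω_{S,z} : K × K → 𝕋`, `ω_{S,z}(x,y) = χ_z(η_S(x,y)) = e((η_S(x,y)·z)₀)`,
where `(·)₀` is the coefficient of `t⁰`. -/
def omegaSZ (p : ℕ) (S : Set ℕ) (z x y : Kp p) : AddCircle (1 : ℝ) :=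
  echarM p ((etaS p S x y * z).coeff 0)

/-! ### Auxiliary material -/

lemma etaS_coeff (p : ℕ) (S : Set ℕ) (x y : Kp p) (i : ℤ) :
    (etaS p S x y).coeff i = ∑ᶠ n ∈ S, x.coeff (i - (n : ℤ)) * y.coeff (i + (n : ℤ)) := rfl

/-- First vanishing lemma: if all coefficients of `x` of index `≤ m - ν(z)` vanish,
then `(η_S(x,y)·z)₀ = 0`. -/
lemma coeff0_eta_left (p : ℕ) (S : Set ℕ) (hS : ∀ n ∈ S, 1 ≤ n) (m : ℕ)
    (z x y : Kp p) (hx : ∀ j : ℤ, j ≤ (m : ℤ) - z.order → x.coeff j = 0) :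
    (etaS p S x y * z).coeff 0 = 0 := by
  rw [HahnSeries.coeff_mul]
  apply Finset.sum_eq_zero
  rintro ⟨i, j⟩ hij
  rw [Finset.mem_addAntidiagonal] at hij
  obtain ⟨-, -, hsum⟩ := hij
  by_cases hj : j < z.order
  · rw [HahnSeries.coeff_eq_zero_of_lt_order hj, mul_zero]
  · push_neg at hj
    have hzero : (etaS p S x y).coeff i = 0 := by
      rw [etaS_coeff]
      apply finsum_mem_of_eqOn_zero
      intro n hn
      have hn1 := hS n hn
      have hc : x.coeff (i - (n : ℤ)) = 0 := hx _ (by simp only [Prod.fst, Prod.snd] at hsum ⊢; omega)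
      show x.coeff (i - (n : ℤ)) * y.coeff (i + (n : ℤ)) = (0 : ℕ → ZMod p) n
      rw [hc, zero_mul, Pi.zero_apply]
    rw [hzero, zero_mul]

/-- Second vanishing lemma: if all coefficients of `x` of index `≤ m - ν(z)` vanish,
then `(η_S(y,x)·z)₀ = 0`. -/
lemma coeff0_eta_right (p : ℕ) (S : Set ℕ) (m : ℕ) (hmax : ∀ n ∈ S, n ≤ m)
    (z x y : Kp p) (hx : ∀ j : ℤ, j ≤ (m : ℤ) - z.order → x.coeff j = 0) :
    (etaS p S y x * z).coeff 0 = 0 := by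
  rw [HahnSeries.coeff_mul]
  apply Finset.sum_eq_zero
  rintro ⟨i, j⟩ hij
  rw [Finset.mem_addAntidiagonal] at hij
  obtain ⟨-, -, hsum⟩ := hij
  by_cases hj : j < z.order
  · rw [HahnSeries.coeff_eq_zero_of_lt_order hj, mul_zero]
  · push_neg at hj
    have hzero : (etaS p S y x).coeff i = 0 := by
      rw [etaS_coeff]
      apply finsum_mem_of_eqOn_zero
      intro n hn
      have hn1 := hmax n hn
      have hc : x.coeff (i + (n : ℤ)) = 0 := hx _ (by simp only [Prod.fst, Prod.snd] at hsum ⊢; omega)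
      show y.coeff (i - (n : ℤ)) * x.coeff (i + (n : ℤ)) = (0 : ℕ → ZMod p) n
      rw [hc, mul_zero, Pi.zero_apply]
    rw [hzero, zero_mul]

/-- The Hahn series supported on `[k, ∞)` attached to a coefficient function on `Set.Ici k`. -/
def hahnOfFun (p : ℕ) (k : ℤ) (f : Set.Ici k → ZMod p) : Kp p :=
  ⟨fun j => if h : k ≤ j then f ⟨j, h⟩ else 0, by
    refine (isPWO_Ici k).mono ?_
    intro j hj
    simp only [Function.mem_support] at hj
    rw [Set.mem_Ici]
    by_contra h
    push_neg at h
    exact hj (dif_neg (not_le.mpr h))⟩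

lemma hahnOfFun_coeff (p : ℕ) (k : ℤ) (f : Set.Ici k → ZMod p) (j : ℤ) :
    (hahnOfFun p k f).coeff j = if h : k ≤ j then f ⟨j, h⟩ else 0 := rfl

lemma hahnU_eq_range (p : ℕ) (k : ℤ) :
    ((hahnU (ZMod p) k : AddSubgroup (Kp p)) : Set (Kp p)) = Set.range (hahnOfFun p k) := by
  ext x
  constructor
  · intro hxmem
    refine ⟨fun j => x.coeff j, ?_⟩
    ext j
    rw [hahnOfFun_coeff]
    by_cases h : k ≤ j
    · rw [dif_pos h]
    · rw [dif_neg h]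
      exact (hxmem j (not_le.mp h)).symm
  · rintro ⟨f, rfl⟩ j hj
    exact dif_neg (not_le.mpr hj)

/-- Let `S ⊆ {1,2,3,…}` be finite and nonempty with `m = max S`, and let
`z ∈ K`, `z ≠ 0`.  If `x ∈ K` satisfies `x_j = 0` for all `j ≤ m − ν(z)` (i.e. `x = 0` or
`ν(x) > m − ν(z)`), then `ω_{S,z}(x,y) = ω_{S,z}(y,x)` for every `y ∈ K`.  Consequently, the
subgroup `S_{ω_{S,z}} = {x : ω_{S,z}(x,y) = ω_{S,z}(y,x) for all y}` contains the compact open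
subgroup `U = {x : x_j = 0 for all j ≤ m − ν(z)}`. -/
theorem statement9 (p : ℕ) (hp : p.Prime) (S : Set ℕ) (hS : ∀ n ∈ S, 1 ≤ n)
    (hfin : S.Finite) (m : ℕ) (hmem : m ∈ S) (hmax : ∀ n ∈ S, n ≤ m)
    (z : Kp p) (hz : z ≠ 0) :
    (∀ x : Kp p, (∀ j : ℤ, j ≤ (m : ℤ) - z.order → x.coeff j = 0) →
      ∀ y : Kp p, omegaSZ p S z x y = omegaSZ p S z y x) ∧
    IsOpen ((hahnU (ZMod p) ((m : ℤ) - z.order + 1) : AddSubgroup (Kp p)) : Set (Kp p)) ∧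
    IsCompact ((hahnU (ZMod p) ((m : ℤ) - z.order + 1) : AddSubgroup (Kp p)) : Set (Kp p)) ∧
    ((hahnU (ZMod p) ((m : ℤ) - z.order + 1) : AddSubgroup (Kp p)) : Set (Kp p)) ⊆
      {x : Kp p | ∀ y : Kp p, omegaSZ p S z x y = omegaSZ p S z y x} := by
  set k : ℤ := (m : ℤ) - z.order + 1 with hk
  have hmain : ∀ x : Kp p, (∀ j : ℤ, j ≤ (m : ℤ) - z.order → x.coeff j = 0) →
      ∀ y : Kp p, omegaSZ p S z x y = omegaSZ p S z y x := by
    intro x hx y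
    unfold omegaSZ
    rw [coeff0_eta_left p S hS m z x y hx, coeff0_eta_right p S m hmax z x y hx]
  -- the identification of `hahnU` with the preimage of `{0}` in the discrete quotient
  have hUeq : ((hahnU (ZMod p) k : AddSubgroup (Kp p)) : Set (Kp p)) =
      (fun x : Kp p => (QuotientAddGroup.mk x : Kp p ⧸ hahnU (ZMod p) k)) ⁻¹' {0} := by
    ext x
    simp only [Set.mem_preimage, Set.mem_singleton_iff, SetLike.mem_coe]
    exact (QuotientAddGroup.eq_zero_iff x).symm
  have hopen : IsOpen ((hahnU (ZMod p) k : AddSubgroup (Kp p)) : Set (Kp p)) := by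
    refine IsOpen.mono ?_ (iInf_le _ k)
    rw [hUeq]
    exact isOpen_induced (t := ⊥) (by
      letI : TopologicalSpace (Kp p ⧸ hahnU (ZMod p) k) := ⊥
      haveI : DiscreteTopology (Kp p ⧸ hahnU (ZMod p) k) := ⟨rfl⟩
      exact isOpen_discrete ({0} : Set (Kp p ⧸ hahnU (ZMod p) k)))
  -- compactness
  letI : TopologicalSpace (ZMod p) := ⊥
  haveI : DiscreteTopology (ZMod p) := ⟨rfl⟩
  haveI : NeZero p := ⟨hp.ne_zero⟩
  haveI : Finite (ZMod p) := inferInstance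
  have hcont : Continuous (hahnOfFun p k) := by
    refine continuous_iInf_rng.2 fun k' => continuous_induced_rng.2 ?_
    -- the map to the quotient factors through finitely many coordinates
    let T := {j : Set.Ici k // (j : ℤ) < k'}
    haveI : Finite T := by
      refine Finite.of_injective (fun j : T => (⟨(j.1 : ℤ), ⟨j.1.2, j.2⟩⟩ : Set.Ico k k')) ?_
      · intro a b hab
        have h2 : ((a.1 : ℤ)) = ((b.1 : ℤ)) := Subtype.mk_eq_mk.mp hab
        exact Subtype.ext (Subtype.ext h2)
    letI : TopologicalSpace (Kp p ⧸ hahnU (ZMod p) k') := ⊥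
    haveI : DiscreteTopology (Kp p ⧸ hahnU (ZMod p) k') := ⟨rfl⟩
    let res : (Set.Ici k → ZMod p) → (T → ZMod p) := fun f j => f j.1
    let ext0 : (T → ZMod p) → (Set.Ici k → ZMod p) := fun u j =>
      if h : (j : ℤ) < k' then u ⟨j, h⟩ else 0
    have hfactor : (fun f => (QuotientAddGroup.mk (hahnOfFun p k f) : Kp p ⧸ hahnU (ZMod p) k'))
        = (fun u => (QuotientAddGroup.mk (hahnOfFun p k (ext0 u)) : Kp p ⧸ hahnU (ZMod p) k'))
          ∘ res := by
      funext f
      simp only [Function.comp_apply]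
      rw [QuotientAddGroup.eq]
      intro j hj
      rw [HahnSeries.coeff_add, HahnSeries.coeff_neg]
      rw [hahnOfFun_coeff, hahnOfFun_coeff]
      by_cases h : k ≤ j
      · rw [dif_pos h, dif_pos h]
        show -(f ⟨j, h⟩) + ext0 (res f) ⟨j, h⟩ = 0
        simp only [ext0, res]
        rw [dif_pos hj]
        exact neg_add_cancel _
      · rw [dif_neg h, dif_neg h, neg_zero, zero_add]
    show Continuous fun f => (QuotientAddGroup.mk (hahnOfFun p k f) : Kp p ⧸ hahnU (ZMod p) k')
    rw [hfactor]
    exact continuous_of_discreteTopology.comp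
      (continuous_pi fun j => continuous_apply j.1)
  have hcomp : IsCompact ((hahnU (ZMod p) k : AddSubgroup (Kp p)) : Set (Kp p)) := by
    rw [hahnU_eq_range]
    exact isCompact_range hcont
  refine ⟨hmain, hopen, hcomp, ?_⟩
  intro x hxmem y
  exact hmain x (fun j hj => hxmem j (by omega)) y
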